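/- Define Z_ε(k,j) = Σ_{q=1}^{∞} q^j · ∫_ε^∞ e^{−qy} y^k dy for ε > 0 and natural numbers k, j. Then: (i) for every k ≥ 1, the limit as ε → 0⁺ of ( Z_ε(k,k) + k! · log ε ) equals k! · H_k; and (ii) for every k ≥ 0, the limit as ε → 0⁺ of ( Z_ε(k,k+1) − (k+1)!/ε ) equals −k!/2. -/

import Mathlib

open MeasureTheory Filter Finset

/-- `Z_ε(k,j) = ∑_{q≥1} q^j ∫_ε^∞ e^{-qy} y^k dy`. -/
noncomputable def Z (ε : ℝ) (k j : ℕ) : ℝ :=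
  ∑' q : ℕ+, ((q : ℕ) : ℝ) ^ j * ∫ y in Set.Ioi ε, Real.exp (-((q : ℕ) : ℝ) * y) * y ^ k

/-- Harmonic numbers `H_k = ∑_{j=1}^k 1/j`. -/
noncomputable def H (k : ℕ) : ℝ := ∑ j ∈ Finset.Icc 1 k, (1 : ℝ) / j

open Real

noncomputable def S (b : ℝ) (k : ℕ) (y : ℝ) : ℝ := ∑ i ∈ range (k+1), (b*y)^i / i.factorial

lemma S_zero (b : ℝ) (k : ℕ) : S b k 0 = 1 := by
  simp only [S, mul_zero]
  rw [Finset.sum_eq_single 0]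
  · simp
  · intro i _ hi; simp [zero_pow hi]
  · simp

lemma hasDerivAt_S (b : ℝ) (k : ℕ) (y : ℝ) :
    HasDerivAt (S b k) (b * (S b k y - (b*y)^k / k.factorial)) y := by
  have h : ∀ i ∈ range (k+1), HasDerivAt (fun y : ℝ => (b*y)^i / i.factorial)
      ((i * (b*y)^(i-1) * b) / i.factorial) y := by
    intro i _
    simpa using (((hasDerivAt_id y).const_mul b).pow i).div_const (i.factorial:ℝ)
  have h2 := HasDerivAt.fun_sum h
  refine h2.congr_deriv ?_
  rw [Finset.sum_range_succ']
  have hS : S b k y - (b*y)^k / k.factorial = ∑ i ∈ range k, (b*y)^i / i.factorial := by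
    rw [S, Finset.sum_range_succ]; ring
  rw [hS, Finset.mul_sum]
  simp only [Nat.cast_zero, zero_mul, Nat.factorial_zero, Nat.cast_one, zero_div, add_zero]
  refine Finset.sum_congr rfl fun i _ => ?_
  have hfac : ((i+1).factorial : ℝ) = (i+1) * i.factorial := by
    rw [Nat.factorial_succ]; push_cast; ring
  rw [hfac]
  have h1 : ((i:ℝ)+1) ≠ 0 := by positivity
  have h2 : (i.factorial : ℝ) ≠ 0 := Nat.cast_ne_zero.2 i.factorial_ne_zero
  simp only [Nat.add_sub_cancel]
  push_cast
  field_simp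

lemma hasDerivAt_A {b : ℝ} (hb : 0 < b) (k : ℕ) (y : ℝ) :
    HasDerivAt (fun y => -(k.factorial / b^(k+1)) * (Real.exp (-(b*y)) * S b k y))
      (Real.exp (-(b*y)) * y^k) y := by
  have he : HasDerivAt (fun y : ℝ => Real.exp (-(b*y))) (-b * Real.exp (-(b*y))) y := by
    have := (((hasDerivAt_id y).const_mul b).neg).exp
    simpa [mul_comm] using this
  have h := (he.mul (hasDerivAt_S b k y)).const_mul (-((k.factorial : ℝ) / b^(k+1)))
  refine h.congr_deriv ?_
  have h2 : (k.factorial : ℝ) ≠ 0 := Nat.cast_ne_zero.2 k.factorial_ne_zero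
  have hbne : b ≠ 0 := hb.ne'
  field_simp [mul_pow]
  ring

lemma tendsto_A {b : ℝ} (hb : 0 < b) (k : ℕ) :
    Tendsto (fun y => -(k.factorial / b^(k+1)) * (Real.exp (-(b*y)) * S b k y)) atTop (nhds 0) := by
  have key : ∀ i : ℕ, Tendsto (fun y : ℝ => (b*y)^i * Real.exp (-(b*y))) atTop (nhds 0) := by
    intro i
    exact (tendsto_pow_mul_exp_neg_atTop_nhds_zero i).comp (tendsto_id.const_mul_atTop hb)
  have h : Tendsto (fun y => Real.exp (-(b*y)) * S b k y) atTop (nhds 0) := by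
    have h2 := tendsto_finset_sum (range (k+1))
      (fun i _ => ((key i).div_const (i.factorial : ℝ)))
    simp only [zero_div, Finset.sum_const_zero] at h2
    refine h2.congr fun y => ?_
    rw [S, Finset.mul_sum]
    exact Finset.sum_congr rfl fun i _ => by ring
  simpa using h.const_mul (-((k.factorial : ℝ) / b^(k+1)))

lemma integrableOn_exp_poly {b : ℝ} (hb : 0 < b) (k : ℕ) {a : ℝ} (ha : 0 ≤ a) :
    IntegrableOn (fun y => Real.exp (-(b*y)) * y^k) (Set.Ioi a) := by
  refine integrableOn_Ioi_deriv_of_nonneg' (fun x _ => hasDerivAt_A hb k x)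
    (fun x hx => ?_) (tendsto_A hb k)
  have : (0:ℝ) ≤ x := ha.trans (le_of_lt hx)
  positivity

lemma integral_exp_poly {b : ℝ} (hb : 0 < b) (k : ℕ) {a : ℝ} (ha : 0 ≤ a) :
    ∫ y in Set.Ioi a, Real.exp (-(b*y)) * y^k
      = (k.factorial / b^(k+1)) * (Real.exp (-(b*a)) * S b k a) := by
  rw [integral_Ioi_of_hasDerivAt_of_nonneg' (fun x _ => hasDerivAt_A hb k x)
    (fun x hx => by have : (0:ℝ) ≤ x := ha.trans (le_of_lt hx); positivity) (tendsto_A hb k)]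
  ring

noncomputable def T (m : ℕ) (ε : ℝ) : ℝ :=
  ∑' n : ℕ, ((n:ℝ)+1)^m * Real.exp (-(((n:ℝ)+1) * ε))

noncomputable def L (ε : ℝ) : ℝ := ∑' n : ℕ, Real.exp (-(((n:ℝ)+1) * ε)) / ((n:ℝ)+1)

lemma term_eq (m : ℕ) (ε : ℝ) (n : ℕ) :
    ((n:ℝ)+1)^m * Real.exp (-(((n:ℝ)+1) * ε)) = (((n+1:ℕ)):ℝ)^m * (Real.exp (-ε))^(n+1) := by
  rw [← Real.exp_nat_mul]
  push_cast
  ring_nf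

lemma summable_T (m : ℕ) {ε : ℝ} (hε : 0 < ε) :
    Summable (fun n : ℕ => ((n:ℝ)+1)^m * Real.exp (-(((n:ℝ)+1) * ε))) := by
  have hr : ‖Real.exp (-ε)‖ < 1 := by
    rw [Real.norm_eq_abs, abs_of_pos (Real.exp_pos _)]
    exact Real.exp_lt_one_iff.2 (by linarith)
  have h := summable_pow_mul_geometric_of_norm_lt_one m hr
  have h2 := (summable_nat_add_iff 1).2 h
  exact h2.congr fun n => (term_eq m ε n).symm

lemma summable_L {ε : ℝ} (hε : 0 < ε) :
    Summable (fun n : ℕ => Real.exp (-(((n:ℝ)+1) * ε)) / ((n:ℝ)+1)) := by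
  refine Summable.of_nonneg_of_le (fun n => div_nonneg (Real.exp_pos _).le (by positivity)) (fun n => ?_)
    ((summable_T 0 hε))
  have h1 : (1:ℝ) ≤ (n:ℝ)+1 := by linarith [Nat.cast_nonneg (α:=ℝ) n]
  calc Real.exp (-(((n:ℝ)+1) * ε)) / ((n:ℝ)+1) ≤ Real.exp (-(((n:ℝ)+1) * ε)) / 1 := by
        gcongr
    _ = ((n:ℝ)+1)^0 * Real.exp (-(((n:ℝ)+1) * ε)) := by simp

lemma Z_eq {ε : ℝ} (hε : 0 < ε) (k j : ℕ) :
    Z ε k j = ∑' n : ℕ, ((n:ℝ)+1)^j *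
      (((k.factorial : ℝ) / ((n:ℝ)+1)^(k+1)) * (Real.exp (-(((n:ℝ)+1)*ε)) * S ((n:ℝ)+1) k ε)) := by
  rw [Z, ← Equiv.tsum_eq Equiv.pnatEquivNat.symm]
  refine tsum_congr fun n => ?_
  have hcast : (((Equiv.pnatEquivNat.symm n : ℕ+) : ℕ) : ℝ) = (n:ℝ)+1 := by
    simp [Equiv.pnatEquivNat]
  rw [hcast]
  have hb : (0:ℝ) < (n:ℝ)+1 := by positivity
  rw [show (fun y => Real.exp (-((n:ℝ)+1) * y) * y ^ k)
      = fun y => Real.exp (-((((n:ℝ)+1)) * y)) * y^k from by funext y; rw [neg_mul]]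
  rw [integral_exp_poly hb k hε.le]

lemma Z_kk (k : ℕ) {ε : ℝ} (hε : 0 < ε) :
    Z ε k k = k.factorial * L ε
      + ∑ i ∈ range k, ((k.factorial : ℝ) / (i+1).factorial) * ε^(i+1) * T i ε := by
  rw [Z_eq hε k k]
  have key : ∀ n : ℕ,
      ((n:ℝ)+1)^k * (((k.factorial : ℝ) / ((n:ℝ)+1)^(k+1)) * (Real.exp (-(((n:ℝ)+1)*ε)) * S ((n:ℝ)+1) k ε))
      = (k.factorial : ℝ) * (Real.exp (-(((n:ℝ)+1)*ε)) / ((n:ℝ)+1))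
        + ∑ i ∈ range k, ((k.factorial : ℝ) / (i+1).factorial) * ε^(i+1) *
            (((n:ℝ)+1)^i * Real.exp (-(((n:ℝ)+1)*ε))) := by
    intro n
    set b : ℝ := (n:ℝ)+1 with hbdef
    set E : ℝ := Real.exp (-(b*ε)) with hEdef
    have hb : (0:ℝ) < b := by positivity
    have hb' : b ≠ 0 := ne_of_gt hb
    have hS : S b k ε = ∑ i ∈ range k, b^(i+1)*ε^(i+1)/(i+1).factorial + 1 := by
      rw [S, Finset.sum_range_succ']
      simp [mul_pow]
    have hsum : (∑ i ∈ range k, ((k.factorial : ℝ) / (i+1).factorial) * ε^(i+1) * (b^i * E))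
        = b^k * ((k.factorial : ℝ) / b^(k+1)) * E * ∑ i ∈ range k, b^(i+1)*ε^(i+1)/(i+1).factorial := by
      rw [Finset.mul_sum]
      refine Finset.sum_congr rfl fun i _ => ?_
      have h1 : ((i+1).factorial : ℝ) ≠ 0 := Nat.cast_ne_zero.2 (i+1).factorial_ne_zero
      field_simp
      ring
    rw [hS, hsum]
    field_simp
    ring
  rw [tsum_congr key, Summable.tsum_add (((summable_L hε)).mul_left _)
    (summable_sum fun i _ => ((summable_T i hε)).mul_left _)]
  rw [tsum_mul_left, Summable.tsum_finsetSum (fun i _ => ((summable_T i hε)).mul_left _)]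
  rw [L]
  congr 1
  exact Finset.sum_congr rfl fun i _ => tsum_mul_left

lemma Z_kk1 (k : ℕ) {ε : ℝ} (hε : 0 < ε) :
    Z ε k (k+1) = ∑ i ∈ range (k+1), ((k.factorial : ℝ) / i.factorial) * ε^i * T i ε := by
  rw [Z_eq hε k (k+1)]
  have key : ∀ n : ℕ,
      ((n:ℝ)+1)^(k+1) * (((k.factorial : ℝ) / ((n:ℝ)+1)^(k+1)) * (Real.exp (-(((n:ℝ)+1)*ε)) * S ((n:ℝ)+1) k ε))
      = ∑ i ∈ range (k+1), ((k.factorial : ℝ) / i.factorial) * ε^i *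
          (((n:ℝ)+1)^i * Real.exp (-(((n:ℝ)+1)*ε))) := by
    intro n
    set b : ℝ := (n:ℝ)+1 with hbdef
    set E : ℝ := Real.exp (-(b*ε)) with hEdef
    have hb : (0:ℝ) < b := by positivity
    have hb' : b ≠ 0 := ne_of_gt hb
    have hS : S b k ε = ∑ i ∈ range (k+1), b^i*ε^i/i.factorial := by
      rw [S]
      exact Finset.sum_congr rfl fun i _ => by rw [mul_pow]
    have hsum : (∑ i ∈ range (k+1), ((k.factorial : ℝ) / i.factorial) * ε^i * (b^i * E))
        = b^(k+1) * ((k.factorial : ℝ) / b^(k+1)) * E * ∑ i ∈ range (k+1), b^i*ε^i/i.factorial := by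
      rw [Finset.mul_sum]
      refine Finset.sum_congr rfl fun i _ => ?_
      have h1 : (i.factorial : ℝ) ≠ 0 := Nat.cast_ne_zero.2 i.factorial_ne_zero
      field_simp
    rw [hS, hsum]
    field_simp
  rw [tsum_congr key, Summable.tsum_finsetSum (fun i _ => ((summable_T i hε)).mul_left _)]
  exact Finset.sum_congr rfl fun i _ => tsum_mul_left

section EM
variable (m : ℕ) {ε : ℝ}

/-- `f t = e^{-εt} t^m` -/
noncomputable def fem (m : ℕ) (ε : ℝ) (t : ℝ) : ℝ := Real.exp (-(ε*t)) * t^m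
noncomputable def fem' (m : ℕ) (ε : ℝ) (t : ℝ) : ℝ :=
  Real.exp (-(ε*t)) * ((m:ℝ) * t^(m-1) - ε * t^m)
noncomputable def fem'' (m : ℕ) (ε : ℝ) (t : ℝ) : ℝ :=
  Real.exp (-(ε*t)) * ((m:ℝ)*((m-1:ℕ):ℝ) * t^(m-1-1) - 2*ε*(m:ℝ)*t^(m-1) + ε^2 * t^m)

lemma hasDerivAt_exp_neg (ε t : ℝ) :
    HasDerivAt (fun t : ℝ => Real.exp (-(ε*t))) (-ε * Real.exp (-(ε*t))) t := by
  have := (((hasDerivAt_id t).const_mul ε).neg).exp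
  simpa [mul_comm] using this

lemma hasDerivAt_fem (ε t : ℝ) : HasDerivAt (fem m ε) (fem' m ε t) t := by
  have h := (hasDerivAt_exp_neg ε t).mul (hasDerivAt_pow m t)
  refine h.congr_deriv ?_
  simp only [fem']
  ring

lemma hasDerivAt_fem' (ε t : ℝ) : HasDerivAt (fem' m ε) (fem'' m ε t) t := by
  have hg : HasDerivAt (fun t : ℝ => (m:ℝ) * t^(m-1) - ε * t^m)
      (((m:ℝ) * (((m-1:ℕ):ℝ) * t^(m-1-1))) - ε * ((m:ℝ) * t^(m-1))) t :=
    ((hasDerivAt_pow (m-1) t).const_mul (m:ℝ)).sub ((hasDerivAt_pow m t).const_mul ε)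
  have h := (hasDerivAt_exp_neg ε t).mul hg
  refine h.congr_deriv ?_
  simp only [fem'']
  ring

lemma continuous_fem : Continuous (fem m ε) := by
  unfold fem; fun_prop

lemma continuous_fem' : Continuous (fem' m ε) := by
  unfold fem'; fun_prop

lemma continuous_fem'' : Continuous (fem'' m ε) := by
  unfold fem''; fun_prop

/-- per-cell second-order Euler–Maclaurin identity -/
lemma cell (c : ℝ) :
    fem m ε (c+1) - (∫ t in c..(c+1), fem m ε t)
      = (fem m ε (c+1) - fem m ε c)/2
        - ∫ s in c..(c+1), fem'' m ε s * (((s-c)^2 - (s-c))/2) := by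
  have hle : c ≤ c + 1 := by linarith
  -- FTC for G s = (s - c) * f s
  have hG : ∀ s ∈ Set.uIcc c (c+1), HasDerivAt (fun s => (s - c) * fem m ε s)
      (fem m ε s + (s - c) * fem' m ε s) s := by
    intro s _
    have := ((hasDerivAt_id s).sub_const c).mul (hasDerivAt_fem m ε s)
    refine this.congr_deriv ?_
    simp only [id_eq]
    ring
  have hIG := intervalIntegral.integral_eq_sub_of_hasDerivAt hG
    (((continuous_fem m).add ((continuous_id.sub continuous_const).mul
      (continuous_fem' m))).intervalIntegrable c (c+1))
  simp only [add_sub_cancel_left, one_mul, sub_self, zero_mul, sub_zero] at hIG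
  have hsplit1 : ∫ s in c..(c+1), (fem m ε s + (s - c) * fem' m ε s)
      = (∫ s in c..(c+1), fem m ε s) + ∫ s in c..(c+1), (s - c) * fem' m ε s :=
    intervalIntegral.integral_add ((continuous_fem m).intervalIntegrable _ _)
      (((continuous_id.sub continuous_const).mul (continuous_fem' m)).intervalIntegrable _ _)
  have E1 : ∫ s in c..(c+1), (s - c) * fem' m ε s
      = fem m ε (c+1) - ∫ s in c..(c+1), fem m ε s := by
    rw [hsplit1] at hIG; linarith
  -- FTC for f itself
  have hIf := intervalIntegral.integral_eq_sub_of_hasDerivAt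
    (fun s _ => hasDerivAt_fem m ε s) ((continuous_fem' m).intervalIntegrable c (c+1))
  -- FTC for H s = f' s * w s
  have hw : ∀ s : ℝ, HasDerivAt (fun s => ((s-c)^2 - (s-c))/2) (s - c - 1/2) s := by
    intro s
    have h1 := ((((hasDerivAt_id s).sub_const c).pow 2).sub ((hasDerivAt_id s).sub_const c)).div_const 2
    refine h1.congr_deriv ?_
    simp only [id_eq]
    ring_nf
  have hH : ∀ s ∈ Set.uIcc c (c+1), HasDerivAt (fun s => fem' m ε s * (((s-c)^2 - (s-c))/2))
      (fem'' m ε s * (((s-c)^2 - (s-c))/2) + fem' m ε s * (s - c - 1/2)) s :=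
    fun s _ => (hasDerivAt_fem' m ε s).mul (hw s)
  have hwc : Continuous (fun s : ℝ => ((s-c)^2 - (s-c))/2) := by fun_prop
  have hu : Continuous (fun s : ℝ => s - c - 1/2) := by fun_prop
  have hIH := intervalIntegral.integral_eq_sub_of_hasDerivAt hH
    ((((continuous_fem'' m).mul hwc).add ((continuous_fem' m).mul hu)).intervalIntegrable _ _)
  have hHval : (fem' m ε (c+1) * ((((c+1)-c)^2 - ((c+1)-c))/2))
      - (fem' m ε c * (((c-c)^2 - (c-c))/2)) = 0 := by ring_nf
  rw [hHval] at hIH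
  have hsplit2 : ∫ s in c..(c+1), (fem'' m ε s * (((s-c)^2 - (s-c))/2) + fem' m ε s * (s - c - 1/2))
      = (∫ s in c..(c+1), fem'' m ε s * (((s-c)^2 - (s-c))/2))
        + ∫ s in c..(c+1), fem' m ε s * (s - c - 1/2) :=
    intervalIntegral.integral_add (((continuous_fem'' m).mul hwc).intervalIntegrable _ _)
      (((continuous_fem' m).mul hu).intervalIntegrable _ _)
  have hsplit3 : ∫ s in c..(c+1), fem' m ε s * (s - c - 1/2)
      = (∫ s in c..(c+1), (s - c) * fem' m ε s) - (∫ s in c..(c+1), fem' m ε s)/2 := by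
    rw [← intervalIntegral.integral_div, ← intervalIntegral.integral_sub
      (f := fun s => (s - c) * fem' m ε s) (g := fun s => fem' m ε s / 2) (((continuous_sub_right c).mul (continuous_fem' m)).intervalIntegrable _ _)
      (((continuous_fem' m).div_const 2).intervalIntegrable _ _)]
    refine intervalIntegral.integral_congr fun s _ => ?_
    ring
  rw [hsplit2, hsplit3, E1, hIf] at hIH
  linarith

lemma cellbound (c : ℝ) :
    |fem m ε (c+1) - (∫ t in c..(c+1), fem m ε t) - (fem m ε (c+1) - fem m ε c)/2|
      ≤ (1/8) * ∫ s in c..(c+1), |fem'' m ε s| := by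
  have heq : fem m ε (c+1) - (∫ t in c..(c+1), fem m ε t) - (fem m ε (c+1) - fem m ε c)/2
      = -(∫ s in c..(c+1), fem'' m ε s * (((s-c)^2 - (s-c))/2)) := by
    have := cell m (ε := ε) c; linarith
  rw [heq, abs_neg]
  have hwc : Continuous (fun s : ℝ => ((s-c)^2 - (s-c))/2) := by fun_prop
  calc |∫ s in c..(c+1), fem'' m ε s * (((s-c)^2-(s-c))/2)|
      ≤ ∫ s in c..(c+1), |fem'' m ε s * (((s-c)^2-(s-c))/2)| :=
        intervalIntegral.abs_integral_le_integral_abs (by linarith)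
    _ ≤ ∫ s in c..(c+1), |fem'' m ε s| * (1/8) := by
        apply intervalIntegral.integral_mono_on (by linarith)
        · exact (((continuous_fem'' m).mul hwc).abs).intervalIntegrable _ _
        · exact (((continuous_fem'' m).abs).mul continuous_const).intervalIntegrable _ _
        · intro s hs
          rw [abs_mul]
          refine mul_le_mul_of_nonneg_left ?_ (abs_nonneg _)
          have h1 : c ≤ s := hs.1
          have h2 : s ≤ c + 1 := hs.2
          rw [abs_le]
          constructor <;> nlinarith [sq_nonneg (2*(s - c) - 1), mul_nonneg (by linarith : (0:ℝ) ≤ s - c) (by linarith : (0:ℝ) ≤ 1 - (s - c))]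
    _ = (1/8) * ∫ s in c..(c+1), |fem'' m ε s| := by
        rw [intervalIntegral.integral_mul_const]
        ring

lemma integrableOn_F (hε : 0 < ε) : IntegrableOn (fun t : ℝ =>
    (m:ℝ)*((m-1:ℕ):ℝ) * (Real.exp (-(ε*t)) * t^(m-1-1))
      + 2*ε*(m:ℝ) * (Real.exp (-(ε*t)) * t^(m-1))
      + ε^2 * (Real.exp (-(ε*t)) * t^m)) (Set.Ioi (0:ℝ)) :=
  (((integrableOn_exp_poly hε (m-1-1) le_rfl).const_mul _).add
    ((integrableOn_exp_poly hε (m-1) le_rfl).const_mul _)).add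
    ((integrableOn_exp_poly hε m le_rfl).const_mul _)

lemma fem''_le (hε : 0 < ε) {t : ℝ} (ht : 0 ≤ t) :
    |fem'' m ε t| ≤ (m:ℝ)*((m-1:ℕ):ℝ) * (Real.exp (-(ε*t)) * t^(m-1-1))
      + 2*ε*(m:ℝ) * (Real.exp (-(ε*t)) * t^(m-1))
      + ε^2 * (Real.exp (-(ε*t)) * t^m) := by
  rw [fem'', abs_mul, Real.abs_exp]
  have hA : (0:ℝ) ≤ (m:ℝ)*((m-1:ℕ):ℝ) * t^(m-1-1) := by positivity
  have hB : (0:ℝ) ≤ 2*ε*(m:ℝ)*t^(m-1) := by positivity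
  have hC : (0:ℝ) ≤ ε^2 * t^m := by positivity
  have habs : |(m:ℝ)*((m-1:ℕ):ℝ) * t^(m-1-1) - 2*ε*(m:ℝ)*t^(m-1) + ε^2 * t^m|
      ≤ (m:ℝ)*((m-1:ℕ):ℝ) * t^(m-1-1) + 2*ε*(m:ℝ)*t^(m-1) + ε^2 * t^m := by
    rw [abs_le]; constructor <;> linarith
  calc Real.exp (-(ε*t)) * |(m:ℝ)*((m-1:ℕ):ℝ) * t^(m-1-1) - 2*ε*(m:ℝ)*t^(m-1) + ε^2 * t^m|
      ≤ Real.exp (-(ε*t)) * ((m:ℝ)*((m-1:ℕ):ℝ) * t^(m-1-1) + 2*ε*(m:ℝ)*t^(m-1) + ε^2 * t^m) :=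
        mul_le_mul_of_nonneg_left habs (Real.exp_pos _).le
    _ = _ := by ring

lemma integrableOn_fem'' (hε : 0 < ε) :
    IntegrableOn (fun t => |fem'' m ε t|) (Set.Ioi (0:ℝ)) := by
  refine Integrable.mono' (integrableOn_F m hε) ((continuous_fem'' m).abs.aestronglyMeasurable) ?_
  filter_upwards [ae_restrict_mem measurableSet_Ioi] with t ht
  rw [Real.norm_eq_abs, abs_abs]
  exact fem''_le m hε (le_of_lt ht)

lemma integral_exp_poly_zero (hε : 0 < ε) (j : ℕ) :
    ∫ t in Set.Ioi (0:ℝ), Real.exp (-(ε*t)) * t^j = (j.factorial : ℝ)/ε^(j+1) := by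
  rw [integral_exp_poly hε j le_rfl, S_zero]
  simp

lemma J_le (hε : 0 < ε) :
    ∫ t in Set.Ioi (0:ℝ), |fem'' m ε t| ≤ 4 * (m.factorial : ℝ) * ε / ε^m := by
  have h1 : ∫ t in Set.Ioi (0:ℝ), |fem'' m ε t| ≤ ∫ t in Set.Ioi (0:ℝ),
      ((m:ℝ)*((m-1:ℕ):ℝ) * (Real.exp (-(ε*t)) * t^(m-1-1))
      + 2*ε*(m:ℝ) * (Real.exp (-(ε*t)) * t^(m-1))
      + ε^2 * (Real.exp (-(ε*t)) * t^m)) := by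
    refine setIntegral_mono_on (integrableOn_fem'' m hε) (integrableOn_F m hε)
      measurableSet_Ioi fun t ht => fem''_le m hε (le_of_lt ht)
  have hA : IntegrableOn (fun t : ℝ => (m:ℝ)*((m-1:ℕ):ℝ) * (Real.exp (-(ε*t)) * t^(m-1-1))) (Set.Ioi (0:ℝ)) :=
    (integrableOn_exp_poly hε (m-1-1) le_rfl).const_mul _
  have hB : IntegrableOn (fun t : ℝ => 2*ε*(m:ℝ) * (Real.exp (-(ε*t)) * t^(m-1))) (Set.Ioi (0:ℝ)) :=
    (integrableOn_exp_poly hε (m-1) le_rfl).const_mul _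
  have hC : IntegrableOn (fun t : ℝ => ε^2 * (Real.exp (-(ε*t)) * t^m)) (Set.Ioi (0:ℝ)) :=
    (integrableOn_exp_poly hε m le_rfl).const_mul _
  have hAB : IntegrableOn (fun t : ℝ => (m:ℝ)*((m-1:ℕ):ℝ) * (Real.exp (-(ε*t)) * t^(m-1-1))
      + 2*ε*(m:ℝ) * (Real.exp (-(ε*t)) * t^(m-1))) (Set.Ioi (0:ℝ)) := hA.add hB
  have h2 : ∫ t in Set.Ioi (0:ℝ),
      ((m:ℝ)*((m-1:ℕ):ℝ) * (Real.exp (-(ε*t)) * t^(m-1-1))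
      + 2*ε*(m:ℝ) * (Real.exp (-(ε*t)) * t^(m-1))
      + ε^2 * (Real.exp (-(ε*t)) * t^m))
      = (m:ℝ)*((m-1:ℕ):ℝ) * (((m-1-1).factorial : ℝ)/ε^((m-1-1)+1))
      + 2*ε*(m:ℝ) * (((m-1).factorial : ℝ)/ε^((m-1)+1))
      + ε^2 * ((m.factorial : ℝ)/ε^(m+1)) := by
    rw [integral_add hAB hC, integral_add hA hB, integral_const_mul, integral_const_mul,
      integral_const_mul, integral_exp_poly_zero hε, integral_exp_poly_zero hε,
      integral_exp_poly_zero hε]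
  rw [h2] at h1
  refine h1.trans ?_
  have hne : ε ≠ 0 := ne_of_gt hε
  rcases m with _ | _ | n
  ·
    simp only [Nat.cast_zero, zero_mul, mul_zero, zero_add, Nat.zero_sub, Nat.factorial_zero,
      Nat.cast_one, pow_zero, pow_one]
    rw [div_one]
    have : ε^2 * (1/ε) = ε := by field_simp [pow_two]
    rw [this]
    linarith
  · norm_num [Nat.factorial]
    have h3 : ε^2 * (ε^2)⁻¹ = 1 := by field_simp
    have h4 : 2*ε*ε⁻¹ = 2 := by field_simp
    have h5 : 4*ε/ε = 4 := by field_simp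
    rw [h4, h3, h5]
    norm_num
  ·
    have hf1 : (((n+2).factorial : ℕ):ℝ) = ((n+2):ℝ)*((n+1):ℝ)*(n.factorial:ℝ) := by
      rw [Nat.factorial_succ, Nat.factorial_succ]; push_cast; ring
    have hf2 : (((n+1).factorial : ℕ):ℝ) = ((n+1):ℝ)*(n.factorial:ℝ) := by
      rw [Nat.factorial_succ]; push_cast; ring
    have hs1 : n+2-1-1 = n := rfl
    have hs2 : n+2-1 = n+1 := rfl
    rw [hs1, hs2, hf1, hf2]
    push_cast
    apply le_of_eq
    field_simp
    ring

lemma em_est (hε : 0 < ε) :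
    |T m ε - (m.factorial : ℝ)/ε^(m+1) + (0:ℝ)^m/2| ≤ ((m.factorial : ℝ)/2) * (ε/ε^m) := by
  set J := ∫ t in Set.Ioi (0:ℝ), |fem'' m ε t| with hJ
  have key : ∀ N : ℕ, |(∑ q ∈ range N, fem m ε ((q:ℝ)+1)) - (∫ t in (0:ℝ)..((N:ℕ):ℝ), fem m ε t)
      - (fem m ε ((N:ℕ):ℝ) - fem m ε 0)/2| ≤ (1/8) * J := by
    intro N
    have hadj : ∑ q ∈ range N, ∫ t in ((q:ℕ):ℝ)..(((q:ℕ):ℝ)+1), fem m ε t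
        = ∫ t in (0:ℝ)..((N:ℕ):ℝ), fem m ε t := by
      have h := intervalIntegral.sum_integral_adjacent_intervals
        (μ := volume) (f := fem m ε) (a := fun k : ℕ => (k:ℝ)) (n := N)
        (fun k _ => (continuous_fem m (ε := ε)).intervalIntegrable _ _)
      push_cast at h
      exact h
    have hadj2 : ∑ q ∈ range N, ∫ t in ((q:ℕ):ℝ)..(((q:ℕ):ℝ)+1), |fem'' m ε t|
        = ∫ t in (0:ℝ)..((N:ℕ):ℝ), |fem'' m ε t| := by
      have h := intervalIntegral.sum_integral_adjacent_intervals
        (μ := volume) (f := fun t => |fem'' m ε t|) (a := fun k : ℕ => (k:ℝ)) (n := N)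
        (fun k _ => ((continuous_fem'' m (ε := ε)).abs).intervalIntegrable _ _)
      push_cast at h
      exact h
    have htel : ∑ q ∈ range N, (fem m ε (((q:ℕ):ℝ)+1) - fem m ε ((q:ℕ):ℝ))
        = fem m ε ((N:ℕ):ℝ) - fem m ε 0 := by
      have h := Finset.sum_range_sub (fun q : ℕ => fem m ε ((q:ℕ):ℝ)) N
      push_cast at h
      simpa using h
    have hexp : (∑ q ∈ range N, fem m ε ((q:ℝ)+1)) - (∫ t in (0:ℝ)..((N:ℕ):ℝ), fem m ε t)
        - (fem m ε ((N:ℕ):ℝ) - fem m ε 0)/2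
        = ∑ q ∈ range N, (fem m ε (((q:ℕ):ℝ)+1) - (∫ t in ((q:ℕ):ℝ)..(((q:ℕ):ℝ)+1), fem m ε t)
            - (fem m ε (((q:ℕ):ℝ)+1) - fem m ε ((q:ℕ):ℝ))/2) := by
      rw [Finset.sum_sub_distrib, Finset.sum_sub_distrib, ← Finset.sum_div, htel, hadj]
    rw [hexp]
    calc |∑ q ∈ range N, (fem m ε (((q:ℕ):ℝ)+1) - (∫ t in ((q:ℕ):ℝ)..(((q:ℕ):ℝ)+1), fem m ε t)
            - (fem m ε (((q:ℕ):ℝ)+1) - fem m ε ((q:ℕ):ℝ))/2)|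
        ≤ ∑ q ∈ range N, |fem m ε (((q:ℕ):ℝ)+1) - (∫ t in ((q:ℕ):ℝ)..(((q:ℕ):ℝ)+1), fem m ε t)
            - (fem m ε (((q:ℕ):ℝ)+1) - fem m ε ((q:ℕ):ℝ))/2| := Finset.abs_sum_le_sum_abs _ _
      _ ≤ ∑ q ∈ range N, (1/8) * ∫ t in ((q:ℕ):ℝ)..(((q:ℕ):ℝ)+1), |fem'' m ε t| :=
          Finset.sum_le_sum fun q _ => cellbound m ((q:ℕ):ℝ)
      _ = (1/8) * ∫ t in (0:ℝ)..((N:ℕ):ℝ), |fem'' m ε t| := by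
          rw [← Finset.mul_sum, hadj2]
      _ ≤ (1/8) * J := by
          have hIoc : ∫ t in (0:ℝ)..((N:ℕ):ℝ), |fem'' m ε t|
              = ∫ t in Set.Ioc (0:ℝ) ((N:ℕ):ℝ), |fem'' m ε t| :=
            intervalIntegral.integral_of_le (Nat.cast_nonneg N)
          rw [hIoc]
          have hmono : ∫ t in Set.Ioc (0:ℝ) ((N:ℕ):ℝ), |fem'' m ε t| ≤ J :=
            setIntegral_mono_set (integrableOn_fem'' m hε)
              (Filter.Eventually.of_forall fun x => abs_nonneg _)
              (HasSubset.Subset.eventuallyLE Set.Ioc_subset_Ioi_self)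
          linarith
  have hsum : Tendsto (fun N : ℕ => ∑ q ∈ range N, fem m ε ((q:ℝ)+1)) atTop (nhds (T m ε)) := by
    have h := (summable_T m hε).hasSum.tendsto_sum_nat
    refine h.congr fun N => Finset.sum_congr rfl fun q _ => ?_
    simp only [fem]
    rw [mul_comm]
    ring_nf
  have hintval : ∫ t in Set.Ioi (0:ℝ), fem m ε t = (m.factorial:ℝ)/ε^(m+1) := by
    have := integral_exp_poly_zero hε m
    simpa [fem] using this
  have hint : Tendsto (fun N : ℕ => ∫ t in (0:ℝ)..((N:ℕ):ℝ), fem m ε t) atTop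
      (nhds ((m.factorial:ℝ)/ε^(m+1))) := by
    have h0 : IntegrableOn (fem m ε) (Set.Ioi (0:ℝ)) := integrableOn_exp_poly hε m le_rfl
    have h := intervalIntegral_tendsto_integral_Ioi 0 h0 tendsto_natCast_atTop_atTop
    rwa [hintval] at h
  have hN : Tendsto (fun N : ℕ => fem m ε ((N:ℕ):ℝ)) atTop (nhds 0) := by
    have h1 : Tendsto (fun t : ℝ => ((ε*t)^m * Real.exp (-(ε*t)))/ε^m) atTop (nhds 0) := by
      simpa using ((tendsto_pow_mul_exp_neg_atTop_nhds_zero m).comp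
        (tendsto_id.const_mul_atTop hε)).div_const (ε^m)
    have h2 : Tendsto (fem m ε) atTop (nhds 0) := by
      refine h1.congr fun t => ?_
      rw [fem, mul_pow]
      have : ε^m ≠ 0 := by positivity
      field_simp
    exact h2.comp tendsto_natCast_atTop_atTop
  have hf0 : fem m ε 0 = (0:ℝ)^m := by simp [fem]
  have hlim : Tendsto (fun N : ℕ => |(∑ q ∈ range N, fem m ε ((q:ℝ)+1))
      - (∫ t in (0:ℝ)..((N:ℕ):ℝ), fem m ε t) - (fem m ε ((N:ℕ):ℝ) - fem m ε 0)/2|) atTop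
      (nhds |T m ε - (m.factorial:ℝ)/ε^(m+1) - (0 - (0:ℝ)^m)/2|) := by
    refine Tendsto.abs ?_
    rw [← hf0]
    exact (hsum.sub hint).sub ((hN.sub tendsto_const_nhds).div_const 2)
  have hle : |T m ε - (m.factorial:ℝ)/ε^(m+1) - (0 - (0:ℝ)^m)/2| ≤ (1/8) * J :=
    le_of_tendsto hlim (Filter.Eventually.of_forall key)
  have heq2 : T m ε - (m.factorial:ℝ)/ε^(m+1) - (0 - (0:ℝ)^m)/2
      = T m ε - (m.factorial:ℝ)/ε^(m+1) + (0:ℝ)^m/2 := by ring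
  rw [heq2] at hle
  have hJle := J_le m hε
  calc |T m ε - (m.factorial : ℝ)/ε^(m+1) + (0:ℝ)^m/2| ≤ (1/8) * J := hle
    _ ≤ (1/8) * (4 * (m.factorial : ℝ) * ε / ε^m) := by linarith
    _ = ((m.factorial : ℝ)/2) * (ε/ε^m) := by ring

end EM

lemma habs' : ∀ x y : ℝ, |x - y| ≤ |x| + |y| := fun x y => by
  rw [sub_eq_add_neg]
  exact (abs_add_le _ _).trans (by rw [abs_neg])

lemma limA (i : ℕ) : Tendsto (fun ε : ℝ => ε^(i+1) * T i ε)
    (nhdsWithin 0 (Set.Ioi 0)) (nhds (i.factorial : ℝ)) := by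
  have h0 : Tendsto (fun ε : ℝ => ε^(i+1) * T i ε - i.factorial)
      (nhdsWithin 0 (Set.Ioi 0)) (nhds 0) := by
    apply squeeze_zero_norm' (a := fun ε : ℝ => ((i.factorial:ℝ)/2) * ε^2 + ε^(i+1)/2)
    · filter_upwards [self_mem_nhdsWithin] with ε hε
      have hε' : (0:ℝ) < ε := hε
      have h := em_est i hε'
      have hpowpos : (0:ℝ) < ε^(i+1) := pow_pos hε' (i+1)
      have h0m1 : (0:ℝ)^i ≤ 1 := by
        cases i with
        | zero => norm_num
        | succ n => simp [zero_pow (Nat.succ_ne_zero n)]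
      have h0m0 : (0:ℝ) ≤ (0:ℝ)^i := by positivity
      have key : ε^(i+1) * T i ε - (i.factorial:ℝ)
          = ε^(i+1) * (T i ε - (i.factorial:ℝ)/ε^(i+1) + (0:ℝ)^i/2) - ε^(i+1) * ((0:ℝ)^i/2) := by
        field_simp
        ring
      rw [Real.norm_eq_abs, key]
      have h1 : |ε^(i+1) * (T i ε - (i.factorial:ℝ)/ε^(i+1) + (0:ℝ)^i/2)|
          ≤ (i.factorial:ℝ)/2 * ε^2 := by
        rw [abs_mul, abs_of_pos hpowpos]
        calc ε^(i+1) * |T i ε - (i.factorial:ℝ)/ε^(i+1) + (0:ℝ)^i/2|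
            ≤ ε^(i+1) * (((i.factorial:ℝ)/2) * (ε/ε^i)) := mul_le_mul_of_nonneg_left h hpowpos.le
          _ = (i.factorial:ℝ)/2 * ε^2 := by
              rw [pow_succ]
              field_simp
      have h2 : |ε^(i+1) * ((0:ℝ)^i/2)| ≤ ε^(i+1)/2 := by
        rw [abs_of_nonneg (by positivity)]
        nlinarith
      calc |ε^(i+1) * (T i ε - (i.factorial:ℝ)/ε^(i+1) + (0:ℝ)^i/2) - ε^(i+1) * ((0:ℝ)^i/2)|
          ≤ |ε^(i+1) * (T i ε - (i.factorial:ℝ)/ε^(i+1) + (0:ℝ)^i/2)| + |ε^(i+1) * ((0:ℝ)^i/2)| :=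
            habs' _ _
        _ ≤ (i.factorial:ℝ)/2 * ε^2 + ε^(i+1)/2 := add_le_add h1 h2
    · have hc : Continuous (fun ε : ℝ => ((i.factorial:ℝ)/2) * ε^2 + ε^(i+1)/2) := by continuity
      have h := hc.tendsto 0
      norm_num at h
      exact h.mono_left nhdsWithin_le_nhds
  have h2 := h0.add (tendsto_const_nhds :
    Tendsto (fun _ : ℝ => (i.factorial:ℝ)) (nhdsWithin 0 (Set.Ioi 0)) _)
  norm_num at h2
  exact h2

lemma limB : Tendsto (fun ε : ℝ => T 0 ε - 1/ε)
    (nhdsWithin 0 (Set.Ioi 0)) (nhds (-(1/2) : ℝ)) := by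
  have h0 : Tendsto (fun ε : ℝ => (T 0 ε - 1/ε) - (-(1/2)))
      (nhdsWithin 0 (Set.Ioi 0)) (nhds 0) := by
    apply squeeze_zero_norm' (a := fun ε : ℝ => ε/2)
    · filter_upwards [self_mem_nhdsWithin] with ε hε
      have hε' : (0:ℝ) < ε := hε
      have h := em_est 0 hε'
      simp only [zero_add, pow_zero, pow_one, Nat.factorial_zero, Nat.cast_one] at h
      rw [Real.norm_eq_abs]
      calc |T 0 ε - 1/ε - (-(1/2))| = |T 0 ε - 1/ε + 1/2| := by ring_nf
        _ ≤ 1/2 * (ε/1) := h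
        _ = ε/2 := by ring
    · have h := (continuous_id.div_const 2).tendsto (0:ℝ)
      norm_num at h
      exact h.mono_left nhdsWithin_le_nhds
  have h2 := h0.add (tendsto_const_nhds :
    Tendsto (fun _ : ℝ => (-(1/2) : ℝ)) (nhdsWithin 0 (Set.Ioi 0)) _)
  norm_num at h2
  convert h2 using 2 with ε
  ring

lemma limC (i : ℕ) : Tendsto (fun ε : ℝ => ε^(i+1) * T (i+1) ε - ((i+1).factorial : ℝ)/ε)
    (nhdsWithin 0 (Set.Ioi 0)) (nhds 0) := by
  apply squeeze_zero_norm' (a := fun ε : ℝ => (((i+1).factorial:ℝ)/2) * ε)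
  · filter_upwards [self_mem_nhdsWithin] with ε hε
    have hε' : (0:ℝ) < ε := hε
    have h := em_est (i+1) hε'
    rw [zero_pow (Nat.succ_ne_zero i)] at h
    have hpowpos : (0:ℝ) < ε^(i+1) := pow_pos hε' (i+1)
    have key : ε^(i+1) * T (i+1) ε - ((i+1).factorial:ℝ)/ε
        = ε^(i+1) * (T (i+1) ε - ((i+1).factorial:ℝ)/ε^(i+1+1) + 0/2) := by
      field_simp
      ring
    rw [Real.norm_eq_abs, key, abs_mul, abs_of_pos hpowpos]
    calc ε^(i+1) * |T (i+1) ε - ((i+1).factorial:ℝ)/ε^(i+1+1) + 0/2|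
        ≤ ε^(i+1) * ((((i+1).factorial:ℝ)/2) * (ε/ε^(i+1))) := mul_le_mul_of_nonneg_left h hpowpos.le
      _ = (((i+1).factorial:ℝ)/2) * ε := by
          field_simp
  · have hc : Continuous (fun ε : ℝ => (((i+1).factorial:ℝ)/2) * ε) := by continuity
    have h := hc.tendsto 0
    norm_num at h
    exact h.mono_left nhdsWithin_le_nhds

lemma L_eq {ε : ℝ} (hε : 0 < ε) : L ε = -Real.log (1 - Real.exp (-ε)) := by
  have hx : |Real.exp (-ε)| < 1 := by
    rw [abs_of_pos (Real.exp_pos _)]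
    exact Real.exp_lt_one_iff.2 (by linarith)
  have h := Real.hasSum_pow_div_log_of_abs_lt_one hx
  rw [L, ← h.tsum_eq]
  refine tsum_congr fun n => ?_
  congr 1
  rw [← Real.exp_nat_mul]
  congr 1
  push_cast
  ring

lemma lim_log : Tendsto (fun ε : ℝ => L ε + Real.log ε) (nhdsWithin 0 (Set.Ioi 0)) (nhds 0) := by
  have hd : HasDerivAt (fun x : ℝ => 1 - Real.exp (-x)) 1 0 := by
    have h1 : HasDerivAt (fun x : ℝ => -x) (-1) 0 := (hasDerivAt_id (0:ℝ)).neg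
    have h2 := h1.exp
    have h3 := h2.const_sub 1
    norm_num at h3
    exact h3
  have h2 := hasDerivAt_iff_tendsto_slope.mp hd
  have h4 : Tendsto (slope (fun x : ℝ => 1 - Real.exp (-x)) 0)
      (nhdsWithin 0 (Set.Ioi 0)) (nhds 1) :=
    h2.mono_left (nhdsWithin_mono _ (fun x hx => ne_of_gt hx))
  have h5 : Tendsto (fun ε : ℝ => (1 - Real.exp (-ε))/ε) (nhdsWithin 0 (Set.Ioi 0)) (nhds 1) := by
    refine h4.congr' ?_
    filter_upwards [self_mem_nhdsWithin] with ε hε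
    rw [slope_def_field]
    norm_num
  have h6 : Tendsto (fun ε : ℝ => -Real.log ((1 - Real.exp (-ε))/ε))
      (nhdsWithin 0 (Set.Ioi 0)) (nhds 0) := by
    have := (h5.log one_ne_zero).neg
    norm_num at this
    exact this
  refine h6.congr' ?_
  filter_upwards [self_mem_nhdsWithin] with ε hε
  have hε' : (0:ℝ) < ε := hε
  have h1e : 0 < 1 - Real.exp (-ε) := by
    have : Real.exp (-ε) < 1 := Real.exp_lt_one_iff.2 (by linarith)
    linarith
  rw [Real.log_div (ne_of_gt h1e) (ne_of_gt hε'), L_eq hε']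
  ring

lemma H_eq (k : ℕ) : H k = ∑ i ∈ range k, (1:ℝ)/((i:ℝ)+1) := by
  rw [H]
  induction k with
  | zero => simp
  | succ n ih =>
    rw [Finset.sum_Icc_succ_top (by norm_num : 1 ≤ n+1), ih, Finset.sum_range_succ]
    push_cast
    norm_num

/-- Asymptotic expansions of `Z_ε(k,k)` and `Z_ε(k,k+1)` as `ε → 0⁺`. -/
theorem Z_asymptotics :
    (∀ k : ℕ, 1 ≤ k →
      Tendsto (fun ε : ℝ => Z ε k k + k.factorial * Real.log ε)
        (nhdsWithin 0 (Set.Ioi 0)) (nhds (k.factorial * H k))) ∧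
    (∀ k : ℕ,
      Tendsto (fun ε : ℝ => Z ε k (k + 1) - (k + 1).factorial / ε)
        (nhdsWithin 0 (Set.Ioi 0)) (nhds (-(k.factorial : ℝ) / 2))) := by
  constructor
  · intro k _
    have hH : H k = ∑ i ∈ range k, (1:ℝ)/((i:ℝ)+1) := H_eq k
    have hlim : Tendsto (fun ε : ℝ => (k.factorial : ℝ)*(L ε + Real.log ε)
        + ∑ i ∈ range k, ((k.factorial : ℝ)/(i+1).factorial) * (ε^(i+1) * T i ε))
        (nhdsWithin 0 (Set.Ioi 0))
        (nhds ((k.factorial : ℝ)*0 + ∑ i ∈ range k, ((k.factorial : ℝ)/(i+1).factorial) * (i.factorial:ℝ))) :=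
      (lim_log.const_mul _).add (tendsto_finset_sum _ fun i _ => (limA i).const_mul _)
    have hval : (k.factorial : ℝ)*0 + ∑ i ∈ range k, ((k.factorial : ℝ)/(i+1).factorial) * (i.factorial:ℝ)
        = k.factorial * H k := by
      rw [hH, Finset.mul_sum, mul_zero, zero_add]
      refine Finset.sum_congr rfl fun i _ => ?_
      have h1 : (((i+1).factorial : ℕ):ℝ) = ((i:ℝ)+1)*(i.factorial:ℝ) := by
        rw [Nat.factorial_succ]; push_cast; ring
      have h2 : (i.factorial : ℝ) ≠ 0 := Nat.cast_ne_zero.2 i.factorial_ne_zero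
      rw [h1]
      field_simp
    rw [hval] at hlim
    refine hlim.congr' ?_
    filter_upwards [self_mem_nhdsWithin] with ε hε
    have hε' : (0:ℝ) < ε := hε
    rw [Z_kk k hε']
    have hre : ∑ i ∈ range k, ((k.factorial : ℝ)/(i+1).factorial) * (ε^(i+1) * T i ε)
        = ∑ i ∈ range k, ((k.factorial : ℝ)/(i+1).factorial) * ε^(i+1) * T i ε :=
      Finset.sum_congr rfl fun i _ => (mul_assoc _ _ _).symm
    rw [hre]
    ring
  · intro k
    have hfac : (((k+1).factorial : ℕ):ℝ) = ((k:ℝ)+1)*(k.factorial:ℝ) := by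
      rw [Nat.factorial_succ]; push_cast; ring
    have hlim : Tendsto (fun ε : ℝ =>
        (∑ i ∈ range k, ((k.factorial : ℝ)/(i+1).factorial)
          * (ε^(i+1) * T (i+1) ε - ((i+1).factorial:ℝ)/ε))
        + (k.factorial : ℝ) * (T 0 ε - 1/ε))
        (nhdsWithin 0 (Set.Ioi 0))
        (nhds ((∑ i ∈ range k, ((k.factorial : ℝ)/(i+1).factorial) * 0)
          + (k.factorial : ℝ) * (-(1/2)))) :=
      (tendsto_finset_sum _ fun i _ => (limC i).const_mul _).add (limB.const_mul _)
    have hval : (∑ i ∈ range k, ((k.factorial : ℝ)/(i+1).factorial) * 0)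
        + (k.factorial : ℝ) * (-(1/2)) = -(k.factorial : ℝ)/2 := by
      simp
      ring
    rw [hval] at hlim
    refine hlim.congr' ?_
    filter_upwards [self_mem_nhdsWithin] with ε hε
    have hε' : (0:ℝ) < ε := hε
    rw [Z_kk1 k hε', Finset.sum_range_succ']
    have hsplit : ∑ i ∈ range k, ((k.factorial : ℝ)/(i+1).factorial)
          * (ε^(i+1) * T (i+1) ε - ((i+1).factorial:ℝ)/ε)
        = (∑ i ∈ range k, ((k.factorial : ℝ)/(i+1).factorial) * ε^(i+1) * T (i+1) ε)
          - (k:ℝ) * ((k.factorial : ℝ)/ε) := by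
      simp only [mul_sub]
      rw [Finset.sum_sub_distrib]
      congr 1
      · exact Finset.sum_congr rfl fun i _ => (mul_assoc _ _ _).symm
      · have : ∀ i ∈ range k, ((k.factorial : ℝ)/(i+1).factorial) * (((i+1).factorial:ℝ)/ε)
            = (k.factorial : ℝ)/ε := by
          intro i _
          have h1 : (((i+1).factorial : ℕ):ℝ) ≠ 0 := Nat.cast_ne_zero.2 (i+1).factorial_ne_zero
          field_simp
        rw [Finset.sum_congr rfl this, Finset.sum_const, Finset.card_range, nsmul_eq_mul]
    rw [hsplit]
    simp only [pow_zero, Nat.factorial_zero, Nat.cast_one]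
    rw [hfac]
    ring
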